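/- arXiv:1611.06035 — 2 statements merged into one kernel-verified Lean document; each statement's English description precedes it below -/
import Mathlib

section
/- For the n-dimensional Moler matrix A(n) and any n ≥ 1, λ_min(A(n)) ≤ 3n/(4^n - 1), where λ_min denotes the smallest eigenvalue. -/
/-!
The Moler matrix factors as `A(n) = UᵀU` with `U` upper unit triangular, all of whose entries
above the diagonal are `-1`. For `v i = 2 ^ (n - 1 - i)` every entry of `U v` is
`2 ^ m - (2 ^ (m - 1) + ⋯ + 1) = 1`, so `vᵀ A(n) v = ‖U v‖² = n`, while `‖v‖² = (4 ^ n - 1) / 3`.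
The Rayleigh quotient of `v` bounds the smallest eigenvalue from above.
-/

open Matrix

noncomputable def molerMat (n : ℕ) : Matrix (Fin n) (Fin n) ℝ :=
  fun i j => if i = j then ((i : ℕ) + 1 : ℝ) else (((min (i : ℕ) (j : ℕ) : ℝ) + 1) - 2)

noncomputable def lamMin (n : ℕ) : ℝ :=
  sInf {r : ℝ | ∃ x : Fin n → ℝ, x ⬝ᵥ x = 1 ∧ r = x ⬝ᵥ (molerMat n).mulVec x}

open Finset

theorem dotProduct_transpose_mul_mulVec {m ι : Type*} [Fintype m] [Fintype ι]
    (U : Matrix m ι ℝ) (x : ι → ℝ) : x ⬝ᵥ (Uᵀ * U) *ᵥ x = U *ᵥ x ⬝ᵥ U *ᵥ x := by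
  rw [← mulVec_mulVec, dotProduct_mulVec, vecMul_transpose]

theorem sInf_unit_quadForm_le_div {ι : Type*} [Fintype ι] {A : Matrix ι ι ℝ}
    (hA : ∀ x, 0 ≤ x ⬝ᵥ A *ᵥ x) {v : ι → ℝ} (hv : v ≠ 0) :
    sInf {r : ℝ | ∃ x : ι → ℝ, x ⬝ᵥ x = 1 ∧ r = x ⬝ᵥ A *ᵥ x} ≤ v ⬝ᵥ A *ᵥ v / (v ⬝ᵥ v) := by
  have hvv : 0 < v ⬝ᵥ v := dotProduct_self_star_pos_iff.mpr hv
  set s := (√(v ⬝ᵥ v))⁻¹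
  have hs : s * s = (v ⬝ᵥ v)⁻¹ := by rw [← mul_inv, Real.mul_self_sqrt hvv.le]
  refine csInf_le ⟨0, ?_⟩ ⟨s • v, ?_, ?_⟩
  · rintro r ⟨x, -, rfl⟩
    exact hA x
  · rw [smul_dotProduct, dotProduct_smul, smul_smul, smul_eq_mul, hs, inv_mul_cancel₀ hvv.ne']
  · rw [mulVec_smul, smul_dotProduct, dotProduct_smul, smul_smul, smul_eq_mul, hs, div_eq_inv_mul]

def molerFactor (n : ℕ) : Matrix (Fin n) (Fin n) ℝ :=
  fun k i => if k = i then 1 else if k < i then -1 else 0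

section molerFactor

variable {n : ℕ}

theorem molerFactor_mul_molerFactor_apply (k i j : Fin n) :
    molerFactor n k i * molerFactor n k j =
      (if k < min i j then 1 else 0) + if k = min i j then (if i = j then 1 else -1) else 0 := by
  simp only [molerFactor, Fin.lt_def, Fin.ext_iff, Fin.coe_min]
  split_ifs <;> norm_num <;> omega

@[simp] theorem molerFactor_castSucc_castSucc (k i : Fin n) :
    molerFactor (n + 1) k.castSucc i.castSucc = molerFactor n k i := by
  simp [molerFactor]

@[simp] theorem molerFactor_castSucc_last (k : Fin n) :
    molerFactor (n + 1) k.castSucc (Fin.last n) = -1 := by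
  simp [molerFactor, Fin.castSucc_lt_last, (Fin.castSucc_lt_last k).ne]

@[simp] theorem molerFactor_last_castSucc (i : Fin n) :
    molerFactor (n + 1) (Fin.last n) i.castSucc = 0 := by
  simp [molerFactor, (Fin.castSucc_lt_last i).ne', (Fin.castSucc_lt_last i).not_gt]

@[simp] theorem molerFactor_last_last : molerFactor (n + 1) (Fin.last n) (Fin.last n) = 1 := by
  simp [molerFactor]

end molerFactor

theorem molerMat_eq_transpose_mul (n : ℕ) : molerMat n = (molerFactor n)ᵀ * molerFactor n := by
  ext i j
  simp only [mul_apply, transpose_apply, molerFactor_mul_molerFactor_apply, sum_add_distrib,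
    sum_ite_eq', mem_univ, if_true, sum_boole, filter_gt_eq_Iio, Fin.card_Iio, molerMat]
  split_ifs with h
  · subst h; simp
  · push_cast [Fin.coe_min]; ring

def molerTestVec (n : ℕ) : Fin n → ℝ := fun i => 2 ^ (n - 1 - (i : ℕ))

theorem molerTestVec_castSucc {n : ℕ} (i : Fin n) :
    molerTestVec (n + 1) i.castSucc = 2 * molerTestVec n i := by
  simp only [molerTestVec, Fin.val_castSucc, ← pow_succ']
  congr 1
  omega

@[simp] theorem molerTestVec_last (n : ℕ) : molerTestVec (n + 1) (Fin.last n) = 1 := by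
  simp [molerTestVec]

theorem molerFactor_mulVec_molerTestVec (n : ℕ) : molerFactor n *ᵥ molerTestVec n = 1 := by
  induction n with
  | zero => exact Subsingleton.elim _ _
  | succ n ih =>
    funext k
    induction k using Fin.lastCases with
    | last => simp [mulVec, dotProduct, Fin.sum_univ_castSucc]
    | cast k =>
      have hk : ∑ i, molerFactor n k i * molerTestVec n i = 1 := congrFun ih k
      simp only [mulVec, dotProduct, Fin.sum_univ_castSucc, molerFactor_castSucc_castSucc,
        molerTestVec_castSucc, molerFactor_castSucc_last, molerTestVec_last, Pi.one_apply,
        mul_left_comm _ (2 : ℝ), ← mul_sum, hk]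
      norm_num

theorem molerTestVec_dotProduct_self (n : ℕ) :
    molerTestVec n ⬝ᵥ molerTestVec n = (4 ^ n - 1) / 3 := by
  simp only [dotProduct, molerTestVec, ← mul_pow]
  rw [Fin.sum_univ_eq_sum_range (fun i => ((2 : ℝ) * 2) ^ (n - 1 - i)),
    sum_range_reflect (fun i => ((2 : ℝ) * 2) ^ i), geom_sum_eq (by norm_num)]
  norm_num

theorem molerTestVec_ne_zero {n : ℕ} (hn : 1 ≤ n) : molerTestVec n ≠ 0 :=
  fun h => pow_ne_zero _ two_ne_zero (congrFun h ⟨0, hn⟩)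

theorem moler_lamMin_le (n : ℕ) (hn : 1 ≤ n) :
    lamMin n ≤ 3 * n / (4 ^ n - 1) := by
  have hpsd : ∀ x, 0 ≤ x ⬝ᵥ molerMat n *ᵥ x := fun x => by
    rw [molerMat_eq_transpose_mul, dotProduct_transpose_mul_mulVec]
    exact dotProduct_self_star_nonneg _
  have hquad : molerTestVec n ⬝ᵥ molerMat n *ᵥ molerTestVec n = n := by
    rw [molerMat_eq_transpose_mul, dotProduct_transpose_mul_mulVec,
      molerFactor_mulVec_molerTestVec, one_dotProduct_one, Fintype.card_fin]
  calc lamMin n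
      ≤ molerTestVec n ⬝ᵥ molerMat n *ᵥ molerTestVec n / (molerTestVec n ⬝ᵥ molerTestVec n) :=
        sInf_unit_quadForm_le_div hpsd (molerTestVec_ne_zero hn)
    _ = 3 * n / (4 ^ n - 1) := by
        rw [hquad, molerTestVec_dotProduct_self, div_div_eq_mul_div, mul_comm]
end

section
/- For even m, the infimum α_*(m) of the MO set Ω(m) exists and satisfies -1/2 ≤ α_*(m) ≤ 0. -/
noncomputable def Mten (n m : ℕ) (idx : Fin m → Fin n) : ℝ :=
  ((sInf (Set.range fun k => (idx k : ℕ) + 1)) : ℕ)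

noncomputable def Nten (n m : ℕ) (idx : Fin m → Fin n) : ℝ :=
  if ∀ k l, idx k = idx l then 0 else 1

def MOset (m : ℕ) : Set ℝ :=
  {α : ℝ | ∀ (n : ℕ) (x : Fin n → ℝ),
    0 ≤ ∑ idx : Fin m → Fin n, (Mten n m idx - α * Nten n m idx) * ∏ k, x (idx k)}

lemma Mten_eq_sum (n m : ℕ) (hm : 0 < m) (idx : Fin m → Fin n) :
    Mten n m idx = ∑ t ∈ Finset.range n, (if ∀ k, t ≤ (idx k : ℕ) then (1:ℝ) else 0) := by
  haveI : Nonempty (Fin m) := ⟨⟨0, hm⟩⟩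
  set a := sInf (Set.range fun k => (idx k : ℕ) + 1) with ha
  obtain ⟨k0, hk0⟩ := Nat.sInf_mem (Set.range_nonempty fun k => (idx k : ℕ) + 1)
  have hk0' : (idx k0 : ℕ) + 1 = a := hk0
  have hle : ∀ k, a ≤ (idx k : ℕ) + 1 := fun k => Nat.sInf_le ⟨k, rfl⟩
  have hfilt : Finset.filter (fun t => ∀ k, t ≤ (idx k : ℕ)) (Finset.range n)
      = Finset.range a := by
    ext t
    simp only [Finset.mem_filter, Finset.mem_range]
    constructor
    · rintro ⟨-, h⟩
      have := h k0; omega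
    · intro ht
      constructor
      · have := (idx k0).isLt; omega
      · intro k
        have := hle k; omega
  rw [Finset.sum_boole, hfilt]
  simp [Mten, ← ha]

lemma sum_prod_eq (m : ℕ) {n : ℕ} (y : Fin n → ℝ) :
    ∑ idx : Fin m → Fin n, ∏ k, y (idx k) = (∑ i, y i) ^ m := by
  rw [← Fintype.piFinset_univ, ← Finset.prod_univ_sum (fun _ : Fin m => Finset.univ)
    (fun _ i => y i)]
  simp

lemma Msum_nonneg (m : ℕ) (hm0 : 0 < m) (hme : Even m) (n : ℕ) (x : Fin n → ℝ) :
    0 ≤ ∑ idx : Fin m → Fin n, Mten n m idx * ∏ k, x (idx k) := by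
  have key : ∀ idx : Fin m → Fin n, Mten n m idx * ∏ k, x (idx k)
      = ∑ t ∈ Finset.range n, ∏ k, (if t ≤ (idx k : ℕ) then x (idx k) else 0) := by
    intro idx
    rw [Mten_eq_sum n m hm0 idx, Finset.sum_mul]
    refine Finset.sum_congr rfl fun t _ => ?_
    by_cases h : ∀ k, t ≤ (idx k : ℕ)
    · rw [if_pos h, one_mul]
      exact Finset.prod_congr rfl fun k _ => (if_pos (h k)).symm
    · push_neg at h
      obtain ⟨k, hk⟩ := h
      have hk' : ¬ t ≤ (idx k : ℕ) := not_le.mpr hk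
      rw [if_neg (fun hall => hk' (hall k)), zero_mul]
      exact (Finset.prod_eq_zero (Finset.mem_univ k)
        (if_neg hk') : (∏ j, (if t ≤ ((idx j : ℕ)) then x (idx j) else 0)) = 0).symm
  rw [Finset.sum_congr rfl fun idx _ => key idx, Finset.sum_comm]
  refine Finset.sum_nonneg fun t _ => ?_
  rw [sum_prod_eq m (fun i => if t ≤ (i : ℕ) then x i else 0)]
  exact hme.pow_nonneg _

lemma zero_mem_MOset (m : ℕ) (hm0 : 0 < m) (hme : Even m) : (0:ℝ) ∈ MOset m := by
  intro n x
  simpa using Msum_nonneg m hm0 hme n x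

lemma Mten_two (m : ℕ) (hm0 : 0 < m) (idx : Fin m → Fin 2) :
    Mten 2 m idx = 1 + (if idx = (fun _ => 1) then (1:ℝ) else 0) := by
  haveI : Nonempty (Fin m) := ⟨⟨0, hm0⟩⟩
  by_cases hc : idx = fun _ => 1
  · subst hc
    simp only [Mten, if_pos rfl]
    norm_num [Set.range_const]
  · rw [if_neg hc]
    have : ∃ k, idx k = 0 := by
      by_contra h
      push_neg at h
      refine hc (funext fun k => ?_)
      rcases Fin.exists_fin_two.mp ⟨idx k, rfl⟩ with h0 | h1
      · exact absurd h0 (h k)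
      · exact h1
    obtain ⟨k, hk⟩ := this
    have h1 : sInf (Set.range fun k => (idx k : ℕ) + 1) = 1 := by
      refine le_antisymm ?_ ?_
      · exact Nat.sInf_le ⟨k, by simp [hk]⟩
      · refine le_csInf (Set.range_nonempty _) ?_
        rintro b ⟨j, rfl⟩
        show 1 ≤ (idx j : ℕ) + 1
        omega
    simp [Mten, h1]

lemma Nten_two (m : ℕ) (hm0 : 0 < m) (idx : Fin m → Fin 2) :
    Nten 2 m idx = 1 - (if idx = (fun _ => 0) then (1:ℝ) else 0)
      - (if idx = (fun _ => 1) then (1:ℝ) else 0) := by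
  have hne : (fun _ : Fin m => (0 : Fin 2)) ≠ (fun _ => 1) := by
    intro h
    have := congrFun h ⟨0, hm0⟩
    simp at this
  by_cases h : ∀ k l, idx k = idx l
  · rw [Nten, if_pos h]
    have hconst : idx = fun _ => idx ⟨0, hm0⟩ := funext fun k => h k _
    rcases Fin.exists_fin_two.mp ⟨idx ⟨0, hm0⟩, rfl⟩ with h0 | h1
    · rw [hconst, h0]
      rw [if_pos rfl, if_neg hne]
      ring
    · rw [hconst, h1]
      rw [if_neg (fun hh => hne hh.symm), if_pos rfl]
      ring
  · rw [Nten, if_neg h]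
    rw [if_neg, if_neg]
    · ring
    · rintro rfl; exact h fun k l => rfl
    · rintro rfl; exact h fun k l => rfl

lemma mem_MOset_lower (m : ℕ) (hm0 : 0 < m) (hme : Even m) {α : ℝ}
    (hα : α ∈ MOset m) : -(1/2) ≤ α := by
  have h := hα 2 ![1, -1]
  have hP1 : ∀ k : Fin m, (![1, -1] : Fin 2 → ℝ) ((fun _ => (1:Fin 2)) k) = -1 := by
    intro k; simp
  have key : ∀ idx : Fin m → Fin 2,
      (Mten 2 m idx - α * Nten 2 m idx) * ∏ k, (![1,-1] : Fin 2 → ℝ) (idx k)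
      = (1 - α) * ∏ k, (![1,-1] : Fin 2 → ℝ) (idx k)
        + (if idx = (fun _ => 1) then (1 + α) * ∏ k, (![1,-1] : Fin 2 → ℝ) (idx k) else 0)
        + (if idx = (fun _ => 0) then α * ∏ k, (![1,-1] : Fin 2 → ℝ) (idx k) else 0) := by
    intro idx
    rw [Mten_two m hm0 idx, Nten_two m hm0 idx]
    by_cases h1 : idx = (fun _ => 1) <;> by_cases h0 : idx = (fun _ => 0)
    · exfalso
      have := congrFun (h1 ▸ h0) ⟨0, hm0⟩
      simp at this
    · rw [if_pos h1, if_neg h0, if_pos h1, if_neg h0]; ring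
    · rw [if_neg h1, if_pos h0, if_neg h1, if_pos h0]; ring
    · rw [if_neg h1, if_neg h0, if_neg h1, if_neg h0]; ring
  rw [Finset.sum_congr rfl fun idx _ => key idx] at h
  rw [Finset.sum_add_distrib, Finset.sum_add_distrib, ← Finset.mul_sum,
    sum_prod_eq m (![1,-1] : Fin 2 → ℝ), Finset.sum_ite_eq' Finset.univ,
    Finset.sum_ite_eq' Finset.univ] at h
  have hx : (∑ i, (![1,-1] : Fin 2 → ℝ) i) = 0 := by simp
  have hp1 : (∏ k : Fin m, (![1,-1] : Fin 2 → ℝ) ((fun _ => (1:Fin 2)) k)) = 1 := by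
    simp only [hP1, Finset.prod_const, Finset.card_univ, Fintype.card_fin]
    exact hme.neg_one_pow
  have hp0 : (∏ k : Fin m, (![1,-1] : Fin 2 → ℝ) ((fun _ => (0:Fin 2)) k)) = 1 := by
    simp
  rw [hx, zero_pow hm0.ne', mul_zero, if_pos (Finset.mem_univ _),
    if_pos (Finset.mem_univ _), hp1, hp0] at h
  linarith

theorem subMO_value_bounds (m : ℕ) (hm0 : 0 < m) (hme : Even m) :
    (MOset m).Nonempty ∧ BddBelow (MOset m) ∧
      -(1 / 2) ≤ sInf (MOset m) ∧ sInf (MOset m) ≤ 0 := by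
  have h0 := zero_mem_MOset m hm0 hme
  have hbdd : BddBelow (MOset m) := ⟨-(1/2), fun α hα => mem_MOset_lower m hm0 hme hα⟩
  exact ⟨⟨0, h0⟩, hbdd, le_csInf ⟨0, h0⟩ (fun α hα => mem_MOset_lower m hm0 hme hα),
    csInf_le hbdd h0⟩
end
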